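/- Under the assumptions of the two-level asymptotic permutation test, the discovery set Â = {v : T_{g(v)}(U) ≤ θ_G, T_v^{θ_G}(U) ≤ θ_V, T_v(U) ≤ θ_V'} satisfies FWER(Â) = P(Â ∩ V₀ ≠ ∅) ≤ |V|·θ_G·θ_V + J·ν_g·θ_V'. -/

import Mathlib

/-!
Write `x ξ = ρ (ξ • U)` for the statistic on the `ξ`-permuted data. Invariance of the law of
`x` under right translations makes the events "the `η`-translate of `x` lies in `B`" equally
likely for all `η`, so `P(x ∈ B)` is at most the largest fraction of translates of a single
orbit that can lie in `B`. For the permutation p-value this fraction is at most `θ`: the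
translates with p-value `≤ θ` are those whose statistic is among the `θ|S|` largest. For the
two-level rule it is at most `θ_G θ_V`: at most `θ_G|S|` translates pass the cell screen, and
among those at most a `θ_V`-fraction pass the conditional test. A union bound then charges
`θ_G θ_V` to each null index in an inactive cell and `θ_V'` to each of the at most `J ν`
null indices in active cells.
-/

open MeasureTheory Finset
open scoped ENNReal

section Counting

variable {S : Type*}

theorem natCard_subtype_mul_right [Group S] (P : S → Prop) (η : S) :
    Nat.card {ζ : S // P (ζ * η)} = Nat.card {ζ : S // P ζ} :=
  Nat.card_congr ((Equiv.mulRight η).subtypeEquiv fun _ => Iff.rfl)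

theorem natCard_rank_le [Finite S] (Q : S → Prop) (f : S → ℝ) {t : ℝ} (ht : 0 ≤ t) :
    (Nat.card {η : S // Q η ∧ (Nat.card {ζ : S // f η ≤ f ζ ∧ Q ζ} : ℝ) ≤ t} : ℝ) ≤ t := by
  set M : Set S := {η | Q η ∧ (Nat.card {ζ : S // f η ≤ f ζ ∧ Q ζ} : ℝ) ≤ t}
  rcases M.eq_empty_or_nonempty with hM | hM
  · change ((Nat.card M : ℕ) : ℝ) ≤ t
    simpa [hM] using ht
  -- every element of `M` is among the `ζ` counted at the minimiser `η₀` of `f` on `M`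
  obtain ⟨η₀, ⟨-, hη₀⟩, hmin⟩ := M.exists_min_image f M.toFinite hM
  calc (Nat.card M : ℝ)
      ≤ Nat.card {ζ | f η₀ ≤ f ζ ∧ Q ζ} := by
        exact_mod_cast Nat.card_mono (Set.toFinite {ζ | f η₀ ≤ f ζ ∧ Q ζ})
          fun η hη => ⟨hmin η hη, hη.1⟩
    _ ≤ t := hη₀

variable [Fintype S]

noncomputable def permPValue (x : S → ℝ) (η : S) : ℝ :=
  Nat.card {ζ : S // x η ≤ x ζ} / Fintype.card S

noncomputable def condPermPValue (θ : ℝ) (g f : S → ℝ) (η : S) : ℝ :=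
  (Nat.card {ζ : S // f η ≤ f ζ ∧ permPValue g ζ ≤ θ} / Fintype.card S) /
    (Nat.card {ζ : S // permPValue g ζ ≤ θ} / Fintype.card S)

theorem permPValue_le_iff (x : S → ℝ) (η : S) (θ : ℝ) :
    permPValue x η ≤ θ ↔ (Nat.card {ζ : S // x η ≤ x ζ} : ℝ) ≤ θ * Fintype.card S :=
  div_le_iff₀ (by exact_mod_cast Fintype.card_pos_iff.mpr ⟨η⟩)

theorem natCard_permPValue_le (x : S → ℝ) {θ : ℝ} (hθ : 0 ≤ θ) :
    (Nat.card {η : S // permPValue x η ≤ θ} : ℝ) ≤ θ * Fintype.card S := by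
  simp_rw [permPValue_le_iff]
  simpa using natCard_rank_le (fun _ => True) x (by positivity : 0 ≤ θ * Fintype.card S)

theorem natCard_condPermPValue_le (g f : S → ℝ) {θG θV : ℝ} (hθG : 0 ≤ θG) (hθV : 0 ≤ θV) :
    (Nat.card {η : S // permPValue g η ≤ θG ∧ condPermPValue θG g f η ≤ θV} : ℝ)
      ≤ θG * θV * Fintype.card S := by
  set Q : S → Prop := fun ζ => permPValue g ζ ≤ θG
  set m : ℕ := Nat.card {ζ // Q ζ}
  have hm : (m : ℝ) ≤ θG * Fintype.card S := natCard_permPValue_le g hθG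
  have hiff : ∀ η, Q η ∧ condPermPValue θG g f η ≤ θV ↔
      Q η ∧ (Nat.card {ζ : S // f η ≤ f ζ ∧ Q ζ} : ℝ) ≤ θV * m := by
    refine fun η => and_congr_right fun hη => ?_
    have : Nonempty S := ⟨η⟩
    have : Nonempty {ζ // Q ζ} := ⟨⟨η, hη⟩⟩
    have hmpos : (0 : ℝ) < m := by exact_mod_cast Nat.card_pos
    rw [condPermPValue, div_div_div_cancel_right₀ (by exact_mod_cast Fintype.card_ne_zero),
      div_le_iff₀ hmpos]
  calc (Nat.card {η : S // Q η ∧ condPermPValue θG g f η ≤ θV} : ℝ)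
      = Nat.card {η : S // Q η ∧ (Nat.card {ζ : S // f η ≤ f ζ ∧ Q ζ} : ℝ) ≤ θV * m} := by
        rw [Nat.card_congr (Equiv.subtypeEquivRight hiff)]
    _ ≤ θV * m := natCard_rank_le Q f (by positivity)
    _ ≤ θV * (θG * Fintype.card S) := by gcongr
    _ = θG * θV * Fintype.card S := by ring

variable [Group S]

theorem permPValue_shift (x : S → ℝ) (η ζ : S) :
    permPValue (fun ξ => x (ξ * η)) ζ = permPValue x (ζ * η) := by
  simp only [permPValue, natCard_subtype_mul_right (fun ξ => x (ζ * η) ≤ x ξ)]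

theorem condPermPValue_shift (θ : ℝ) (g f : S → ℝ) (η ζ : S) :
    condPermPValue θ (fun ξ => g (ξ * η)) (fun ξ => f (ξ * η)) ζ
      = condPermPValue θ g f (ζ * η) := by
  simp only [condPermPValue, permPValue_shift,
    natCard_subtype_mul_right (fun ξ => f (ζ * η) ≤ f ξ ∧ permPValue g ξ ≤ θ),
    natCard_subtype_mul_right (fun ξ => permPValue g ξ ≤ θ)]

theorem permPValue_orbit {𝒰 : Type*} [MulAction S 𝒰] (ρ : 𝒰 → ℝ) (u : 𝒰) (ξ : S) :
    permPValue (fun ξ' => ρ (ξ' • u)) ξ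
      = Nat.card {ξ' : S // ρ (ξ • u) ≤ ρ (ξ' • ξ • u)} / Fintype.card S := by
  simp only [permPValue, smul_smul]
  congr 2
  exact (natCard_subtype_mul_right (fun ζ => ρ (ξ • u) ≤ ρ (ζ • u)) ξ).symm

end Counting

section Measurability

theorem measurable_natCard_subtype {α ι : Type*} [MeasurableSpace α] [Fintype ι]
    {p : α → ι → Prop} (hp : ∀ i, MeasurableSet {a | p a i}) :
    Measurable fun a => (Nat.card {i // p a i} : ℝ) := by
  classical
  have hsum : (fun a => (Nat.card {i // p a i} : ℝ)) = fun a => ∑ i, if p a i then 1 else 0 := by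
    ext a
    rw [Nat.card_eq_fintype_card, Fintype.card_subtype, Finset.natCast_card_filter]
  rw [hsum]
  exact Finset.measurable_sum _ fun i _ => Measurable.ite (hp i) measurable_const measurable_const

variable {S : Type*} [Fintype S]

theorem measurable_permPValue (η : S) : Measurable fun x : S → ℝ => permPValue x η :=
  (measurable_natCard_subtype fun ζ =>
    measurableSet_le (measurable_pi_apply η) (measurable_pi_apply ζ)).div_const _

theorem measurable_condPermPValue (θ : ℝ) (η : S) :
    Measurable fun y : S → ℝ × ℝ => condPermPValue θ (Prod.fst ∘ y) (Prod.snd ∘ y) η := by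
  have hG : ∀ ζ, MeasurableSet {y : S → ℝ × ℝ | permPValue (Prod.fst ∘ y) ζ ≤ θ} := fun ζ =>
    measurableSet_le ((measurable_permPValue ζ).comp (by fun_prop)) measurable_const
  have hnum := measurable_natCard_subtype fun ζ =>
    (measurableSet_le ((measurable_pi_apply η).snd) ((measurable_pi_apply ζ).snd)).inter (hG ζ)
  exact (hnum.div_const _).div ((measurable_natCard_subtype hG).div_const _)

end Measurability

section Exchangeability

theorem measure_le_of_natCard_mem_le {ι α : Type*} [Fintype ι] [Nonempty ι]
    [MeasurableSpace α] (μ : Measure α) [IsProbabilityMeasure μ] {s : ι → Set α}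
    (hs : ∀ i, MeasurableSet (s i)) {m : ℝ≥0∞} (hm : ∀ i, μ (s i) = m) {t : ℝ}
    (ht : ∀ a, (Nat.card {i // a ∈ s i} : ℝ) ≤ t * Fintype.card ι) :
    m ≤ ENNReal.ofReal t := by
  classical
  have hcount : ∀ a, ∑ i, (s i).indicator 1 a = (Nat.card {i // a ∈ s i} : ℝ≥0∞) := fun a => by
    rw [Nat.card_eq_fintype_card, Fintype.card_subtype, Finset.natCast_card_filter]
    simp [Set.indicator_apply]
  have hmul : (Fintype.card ι : ℝ≥0∞) * m ≤ Fintype.card ι * ENNReal.ofReal t :=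
    calc (Fintype.card ι : ℝ≥0∞) * m = ∑ i, μ (s i) := by simp [hm]
      _ = ∫⁻ a, ∑ i, (s i).indicator 1 a ∂μ := by
        rw [lintegral_finsetSum _ fun i _ => measurable_one.indicator (hs i)]
        simp [lintegral_indicator_one (hs _)]
      _ ≤ ∫⁻ _, ENNReal.ofReal (t * Fintype.card ι) ∂μ := lintegral_mono fun a => by
        rw [hcount, ← ENNReal.ofReal_natCast]
        exact ENNReal.ofReal_le_ofReal (ht a)
      _ = Fintype.card ι * ENNReal.ofReal t := by
        simp [ENNReal.ofReal_mul' (Nat.cast_nonneg _), mul_comm]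
  exact (ENNReal.mul_le_mul_iff_right (by simp) (by simp)).mp hmul

variable {Ω S β : Type*} [MeasurableSpace Ω] {μ : Measure Ω} [IsProbabilityMeasure μ]
  [Group S] [Fintype S]

theorem measure_preimage_le_of_natCard_shift_mem_le [MeasurableSpace β] {X : Ω → S → β}
    (hX : Measurable X) (hinv : ∀ ξ : S, μ.map (fun ω ξ' => X ω (ξ' * ξ)) = μ.map X)
    {B : Set (S → β)} (hB : MeasurableSet B) {t : ℝ}
    (ht : ∀ x : S → β, (Nat.card {η : S // (fun ξ => x (ξ * η)) ∈ B} : ℝ) ≤ t * Fintype.card S) :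
    μ (X ⁻¹' B) ≤ ENNReal.ofReal t := by
  have hshift : ∀ η : S, Measurable fun ω ξ' => X ω (ξ' * η) := fun η => by fun_prop
  refine measure_le_of_natCard_mem_le μ (fun η => hshift η hB) (fun η => ?_) fun ω => ht (X ω)
  rw [← Measure.map_apply (hshift η) hB, hinv, Measure.map_apply hX hB]

theorem measureReal_permPValue_le {X : Ω → S → ℝ} (hX : Measurable X)
    (hinv : ∀ ξ : S, μ.map (fun ω ξ' => X ω (ξ' * ξ)) = μ.map X) {θ : ℝ} (hθ : 0 ≤ θ) :
    μ.real {ω | permPValue (X ω) 1 ≤ θ} ≤ θ := by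
  refine ENNReal.toReal_le_of_le_ofReal hθ <| measure_preimage_le_of_natCard_shift_mem_le hX hinv
    (measurableSet_le (measurable_permPValue 1) measurable_const) fun x => ?_
  simpa only [Set.mem_ofPred_eq, permPValue_shift, one_mul] using natCard_permPValue_le x hθ

theorem measureReal_condPermPValue_le {X : Ω → S → ℝ × ℝ} (hX : Measurable X)
    (hinv : ∀ ξ : S, μ.map (fun ω ξ' => X ω (ξ' * ξ)) = μ.map X) {θG θV : ℝ}
    (hθG : 0 ≤ θG) (hθV : 0 ≤ θV) :
    μ.real {ω | permPValue (Prod.fst ∘ X ω) 1 ≤ θG ∧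
      condPermPValue θG (Prod.fst ∘ X ω) (Prod.snd ∘ X ω) 1 ≤ θV} ≤ θG * θV := by
  set B : Set (S → ℝ × ℝ) :=
    {y | permPValue (Prod.fst ∘ y) 1 ≤ θG ∧ condPermPValue θG (Prod.fst ∘ y) (Prod.snd ∘ y) 1 ≤ θV}
  have hB : MeasurableSet B :=
    (measurableSet_le ((measurable_permPValue 1).comp (by fun_prop)) measurable_const).inter
      (measurableSet_le (measurable_condPermPValue θG 1) measurable_const)
  refine ENNReal.toReal_le_of_le_ofReal (by positivity) <|
    measure_preimage_le_of_natCard_shift_mem_le (B := B) hX hinv hB fun y => ?_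
  have hmem : ∀ η, (fun ξ => y (ξ * η)) ∈ B ↔ permPValue (Prod.fst ∘ y) η ≤ θG ∧
      condPermPValue θG (Prod.fst ∘ y) (Prod.snd ∘ y) η ≤ θV := fun η => by
    change permPValue (fun ξ => (Prod.fst ∘ y) (ξ * η)) 1 ≤ θG ∧
      condPermPValue θG (fun ξ => (Prod.fst ∘ y) (ξ * η)) (fun ξ => (Prod.snd ∘ y) (ξ * η)) 1 ≤ θV
        ↔ _
    rw [permPValue_shift, condPermPValue_shift, one_mul]
  rw [Nat.card_congr (Equiv.subtypeEquivRight hmem)]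
  exact natCard_condPermPValue_le (Prod.fst ∘ y) (Prod.snd ∘ y) hθG hθV

end Exchangeability

theorem measureReal_biUnion_le_of_split {ι α : Type*} [MeasurableSpace α] (μ : Measure α)
    (s : Finset ι) (E : ι → Set α) (P : ι → Prop) [DecidablePred P] {a b : ℝ}
    (ha : ∀ i ∈ s, P i → μ.real (E i) ≤ a) (hb : ∀ i ∈ s, ¬P i → μ.real (E i) ≤ b) :
    μ.real (⋃ i ∈ s, E i) ≤ #(s.filter P) * a + #(s.filter (¬P ·)) * b := by
  calc μ.real (⋃ i ∈ s, E i) ≤ ∑ i ∈ s, μ.real (E i) := measureReal_biUnion_finset_le s E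
    _ = ∑ i ∈ s.filter P, μ.real (E i) + ∑ i ∈ s.filter (¬P ·), μ.real (E i) :=
      (sum_filter_add_sum_filter_not s P _).symm
    _ ≤ #(s.filter P) • a + #(s.filter (¬P ·)) • b := by
      gcongr
      · exact sum_le_card_nsmul _ _ _ fun i hi => ha i (mem_filter.1 hi).1 (mem_filter.1 hi).2
      · exact sum_le_card_nsmul _ _ _ fun i hi => hb i (mem_filter.1 hi).1 (mem_filter.1 hi).2
    _ = _ := by simp only [nsmul_eq_mul]

theorem card_filter_not_forall_cell_le {V C : Type*} [Fintype V] [DecidableEq V] [Fintype C]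
    [DecidableEq C] (cell : V → C) (A s : Finset V) {ν : ℕ}
    (hν : ∀ c, #(univ.filter fun v => cell v = c) ≤ ν) :
    #(s.filter fun v => ¬∀ w, cell w = cell v → w ∉ A)
      ≤ #(univ.filter fun c => ∃ v ∈ A, cell v = c) * ν := by
  rw [mul_comm]
  refine card_le_mul_card_image_of_maps_to (f := cell) (fun v hv => ?_) ν fun c _ =>
    (card_le_card (filter_subset_filter _ (subset_univ _))).trans (hν c)
  obtain ⟨w, hwv, hwA⟩ := not_forall₂.1 (mem_filter.1 hv).2
  rw [not_not] at hwA
  exact mem_filter.2 ⟨mem_univ _, w, hwA, hwv⟩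

/-- Corollary 3 (FWER of the asymptotic two-level permutation test): with cell- and
index-level permutation p-values `T_g`, `T_v`, conditional p-values `T_v^{θ_G}`,
invariance holding for null indices and doubly-null indices, `J` the number of active
cells and `ν` the maximal cell size, the discovery set
`Â = {v : T_{g(v)}(U) ≤ θ_G, T_v^{θ_G}(U) ≤ θ_V, T_v(U) ≤ θ_V'}` satisfies
`P(Â ∩ V₀ ≠ ∅) ≤ |V|·θ_G·θ_V + J·ν·θ_V'`. -/
theorem stmt_10 {Ω S 𝒰 V C : Type*} [MeasurableSpace Ω] (μ : Measure Ω)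
    [IsProbabilityMeasure μ] [Group S] [Fintype S] [MulAction S 𝒰]
    [Fintype V] [Fintype C] [DecidableEq C]
    (cell : V → C) (A : Finset V)
    (U : Ω → 𝒰) (ρg : C → 𝒰 → ℝ) (ρv : V → 𝒰 → ℝ)
    (hmeasg : ∀ (c : C) (ξ : S), Measurable (fun ω => ρg c (ξ • U ω)))
    (hmeasv : ∀ (v : V) (ξ : S), Measurable (fun ω => ρv v (ξ • U ω)))
    -- invariance for null indices
    (hinv0 : ∀ v : V, v ∉ A → ∀ ξ : S,
      μ.map (fun ω => fun ξ' : S => ρv v ((ξ' * ξ) • U ω))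
        = μ.map (fun ω => fun ξ' : S => ρv v (ξ' • U ω)))
    -- joint invariance for indices in inactive cells
    (hinv00 : ∀ v : V, (∀ w : V, cell w = cell v → w ∉ A) → ∀ ξ : S,
      μ.map (fun ω => fun ξ' : S =>
          (ρg (cell v) ((ξ' * ξ) • U ω), ρv v ((ξ' * ξ) • U ω)))
        = μ.map (fun ω => fun ξ' : S => (ρg (cell v) (ξ' • U ω), ρv v (ξ' • U ω))))
    (θG θV θV' : ℝ) (hθG : θG ∈ Set.Icc (0 : ℝ) 1) (hθV : θV ∈ Set.Icc (0 : ℝ) 1)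
    (hθV' : θV' ∈ Set.Icc (0 : ℝ) 1)
    (Tg : C → 𝒰 → ℝ) (Tv Tvc : V → 𝒰 → ℝ)
    (hTg : ∀ c u, Tg c u
      = (Nat.card {ξ : S // ρg c u ≤ ρg c (ξ • u)} : ℝ) / Fintype.card S)
    (hTv : ∀ v u, Tv v u
      = (Nat.card {ξ : S // ρv v u ≤ ρv v (ξ • u)} : ℝ) / Fintype.card S)
    (hTvc : ∀ v u, Tvc v u
      = ((Nat.card {ξ : S // ρv v u ≤ ρv v (ξ • u) ∧ Tg (cell v) (ξ • u) ≤ θG} : ℝ)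
            / Fintype.card S)
          / ((Nat.card {ξ : S // Tg (cell v) (ξ • u) ≤ θG} : ℝ) / Fintype.card S))
    (νg J : ℕ)
    (hν : ∀ c : C, (Finset.univ.filter (fun v : V => cell v = c)).card ≤ νg)
    (hJ : (Finset.univ.filter (fun c : C => ∃ v ∈ A, cell v = c)).card = J) :
    (μ (⋃ v ∈ {v : V | v ∉ A},
        {ω | Tg (cell v) (U ω) ≤ θG ∧ Tvc v (U ω) ≤ θV ∧ Tv v (U ω) ≤ θV'})).toReal
      ≤ (Fintype.card V : ℝ) * θG * θV + (J : ℝ) * (νg : ℝ) * θV' := by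
  classical
  obtain ⟨hθG, -⟩ := hθG
  obtain ⟨hθV, -⟩ := hθV
  obtain ⟨hθV', -⟩ := hθV'
  have hTg' : ∀ c u (ξ : S), Tg c (ξ • u) = permPValue (fun ξ' => ρg c (ξ' • u)) ξ :=
    fun c u ξ => by rw [hTg, permPValue_orbit]
  have hTg1 : ∀ c u, Tg c u = permPValue (fun ξ' : S => ρg c (ξ' • u)) 1 :=
    fun c u => by simpa only [one_smul] using hTg' c u 1
  have hTv' : ∀ v u, Tv v u = permPValue (fun ξ' : S => ρv v (ξ' • u)) 1 :=
    fun v u => by simp only [hTv, permPValue, one_smul]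
  have hTvc' : ∀ v u, Tvc v u = condPermPValue θG (fun ξ' : S => ρg (cell v) (ξ' • u))
      (fun ξ' => ρv v (ξ' • u)) 1 :=
    fun v u => by simp only [hTvc, condPermPValue, hTg', one_smul]
  set E : V → Set Ω := fun v =>
    {ω | Tg (cell v) (U ω) ≤ θG ∧ Tvc v (U ω) ≤ θV ∧ Tv v (U ω) ≤ θV'}
  have hnull : ∀ v, v ∉ A → μ.real (E v) ≤ θV' := fun v hv =>
    (measureReal_mono fun ω hω => (hTv' v (U ω)).symm.le.trans hω.2.2).trans <|
      measureReal_permPValue_le (measurable_pi_lambda _ (hmeasv v)) (hinv0 v hv) hθV'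
  have hdnull : ∀ v, (∀ w, cell w = cell v → w ∉ A) → μ.real (E v) ≤ θG * θV := fun v hv => by
    refine (measureReal_mono fun ω hω => ?_).trans <| measureReal_condPermPValue_le
      (measurable_pi_lambda _ fun ξ => (hmeasg _ ξ).prodMk (hmeasv v ξ)) (hinv00 v hv) hθG hθV
    exact ⟨(hTg1 _ (U ω)).symm.le.trans hω.1, (hTvc' v (U ω)).symm.le.trans hω.2.1⟩
  have hsplit := measureReal_biUnion_le_of_split μ (univ.filter (· ∉ A)) E
    (fun v => ∀ w, cell w = cell v → w ∉ A) (fun v _ => hdnull v)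
    (fun v hv _ => hnull v (mem_filter.1 hv).2)
  have hcard : #((univ.filter (· ∉ A)).filter fun v => ¬∀ w, cell w = cell v → w ∉ A)
      ≤ J * νg := hJ ▸ card_filter_not_forall_cell_le cell A _ hν
  calc (μ (⋃ v ∈ {v | v ∉ A}, E v)).toReal = μ.real (⋃ v ∈ univ.filter (· ∉ A), E v) := by
        rw [← coe_filter_univ, set_biUnion_coe, measureReal_def]
    _ ≤ _ := hsplit
    _ ≤ Fintype.card V * (θG * θV) + (J * νg : ℕ) * θV' := by
        gcongr
        · exact card_le_univ _
    _ = _ := by push_cast; ring
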